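/- arXiv:math-ph/0110035 — 2 statements merged into one kernel-verified Lean document; each statement's English description precedes it below -/
import Mathlib

section
/- Let H be a complex Hilbert space and let 𝔅 be a quasipoint of L(H). Then: (a) 𝔅 contains a finite-dimensional subspace if and only if there exists a one-dimensional subspace ℂx₀ of H (uniquely determined by 𝔅) such that 𝔅 = {U ∈ L(H) : ℂx₀ ⊆ U}; (b) 𝔅 contains no finite-dimensional subspace if and only if every closed subspace of H of finite codimension belongs to 𝔅. -/
/-- The lattice `L(H)` of closed subspaces of the Hilbert space `H`,
ordered by inclusion. -/
abbrev ClosedSub (H : Type*) [NormedAddCommGroup H] [InnerProductSpace ℂ H] : Type _ :=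
  {U : Submodule ℂ H // IsClosed (U : Set H)}

variable {H : Type*} [NormedAddCommGroup H] [InnerProductSpace ℂ H]

instance : OrderBot (ClosedSub H) where
  bot := ⟨⊥, by rw [Submodule.bot_coe]; exact isClosed_singleton⟩
  bot_le U := by change (⊥ : Submodule ℂ H) ≤ U.1; exact bot_le

/-- A filter base in a partially ordered set `L` with least element `⊥`. -/
def IsFilterBase {L : Type*} [PartialOrder L] [OrderBot L] (B : Set L) : Prop :=
  B.Nonempty ∧ (⊥ : L) ∉ B ∧ ∀ a ∈ B, ∀ b ∈ B, ∃ c ∈ B, c ≤ a ∧ c ≤ b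

/-- A quasipoint of `L`: a maximal filter base. -/
def IsQuasipoint {L : Type*} [PartialOrder L] [OrderBot L] (B : Set L) : Prop :=
  IsFilterBase B ∧ ∀ C : Set L, IsFilterBase C → B ⊆ C → C = B

/-!
If some member of a quasipoint `𝔅` is finite-dimensional, one of minimal dimension lies below
every member of `𝔅`, so any nonzero vector `x₀` in it spans a line contained in all of `𝔅`; the
closed subspaces containing `x₀` form a filter base, and maximality forces equality. Otherwise
every `V ∈ 𝔅` meets each closed `W` of finite codimension nontrivially (`V ∩ W = 0` would embed
`V` into `H ⧸ W`), so the sets `V ∩ W` generate a filter base containing `𝔅` and `W`. Conversely,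
a finite-dimensional `U ∈ 𝔅` has an orthogonal complement of finite codimension, and `U`, `Uᗮ`
cannot both lie in a filter base.
-/

open Submodule

theorem Submodule.finiteDimensional_of_disjoint_of_finiteDimensional_quotient
    {K V : Type*} [DivisionRing K] [AddCommGroup V] [Module K V] {p q : Submodule K V}
    (h : Disjoint p q) [FiniteDimensional K (V ⧸ q)] : FiniteDimensional K p := by
  refine Module.Finite.of_injective (q.mkQ ∘ₗ p.subtype) ?_
  rw [← LinearMap.ker_eq_bot, LinearMap.ker_comp, ker_mkQ, ← disjoint_iff_comap_eq_bot]
  exact h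

theorem Submodule.finiteDimensional_quotient_orthogonal
    {𝕜 E : Type*} [RCLike 𝕜] [NormedAddCommGroup E] [InnerProductSpace 𝕜 E]
    (K : Submodule 𝕜 E) [FiniteDimensional 𝕜 K] : FiniteDimensional 𝕜 (E ⧸ Kᗮ) :=
  (quotientEquivOfIsCompl Kᗮ K K.isCompl_orthogonal.symm).symm
    |>.finiteDimensional

namespace ClosedSub

def inf (U W : ClosedSub H) : ClosedSub H := ⟨U.1 ⊓ W.1, U.2.inter W.2⟩

noncomputable def line (x : H) : ClosedSub H := ⟨ℂ ∙ x, closed_of_finiteDimensional _⟩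

noncomputable def orthogonal (U : ClosedSub H) : ClosedSub H := ⟨U.1ᗮ, U.1.isClosed_orthogonal⟩

theorem inf_le_left (U W : ClosedSub H) : U.inf W ≤ U := Subtype.coe_le_coe.mp _root_.inf_le_left

theorem inf_le_right (U W : ClosedSub H) : U.inf W ≤ W :=
  Subtype.coe_le_coe.mp _root_.inf_le_right

theorem val_eq_bot_iff {U : ClosedSub H} : U.1 = ⊥ ↔ U = ⊥ := by
  rw [Subtype.ext_iff]; rfl

theorem isFilterBase_setOf_mem {x : H} (hx : x ≠ 0) :
    IsFilterBase {U : ClosedSub H | x ∈ U.1} :=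
  ⟨⟨⟨⊤, isClosed_univ⟩, trivial⟩, fun h => hx ((mem_bot ℂ).mp h),
    fun U hU W hW => ⟨U.inf W, mem_inf.mpr ⟨hU, hW⟩, U.inf_le_left W, U.inf_le_right W⟩⟩

theorem span_singleton_le_of_setOf_mem_subset {x y : H}
    (h : {U : ClosedSub H | x ∈ U.1} ⊆ {U : ClosedSub H | y ∈ U.1}) : ℂ ∙ y ≤ ℂ ∙ x :=
  (span_singleton_le_iff_mem y _).mpr (h (a := line x) (mem_span_singleton_self x))

end ClosedSub

open ClosedSub

theorem IsFilterBase.not_orthogonal_mem {B : Set (ClosedSub H)} (hB : IsFilterBase B)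
    {U : ClosedSub H} (hU : U ∈ B) : U.orthogonal ∉ B := fun hUo => by
  obtain ⟨c, hc, hcU, hcUo⟩ := hB.2.2 U hU _ hUo
  have hc_bot : c.1 = ⊥ := le_bot_iff.mp <| inf_orthogonal_eq_bot U.1 ▸ le_inf hcU hcUo
  exact hB.2.1 (val_eq_bot_iff.mp hc_bot ▸ hc)

theorem IsFilterBase.exists_le_of_finiteDimensional {B : Set (ClosedSub H)}
    (hB : IsFilterBase B) (h : ∃ U ∈ B, FiniteDimensional ℂ U.1) : ∃ V ∈ B, ∀ U ∈ B, V ≤ U := by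
  let S := {U ∈ B | FiniteDimensional ℂ U.1}
  let dim := fun U : ClosedSub H => Module.finrank ℂ U.1
  let V := Function.argminOn dim S h
  obtain ⟨hV, hVfd⟩ : V ∈ S := Function.argminOn_mem dim S h
  refine ⟨V, hV, fun U hU => ?_⟩
  obtain ⟨c, hc, hcV, hcU⟩ := hB.2.2 V hV U hU
  have hcfd : FiniteDimensional ℂ c.1 := finiteDimensional_of_le hcV
  have hc_eq : c = V := Subtype.ext <| eq_of_le_of_finrank_le hcV <|
    not_lt.mp (Function.not_lt_argminOn dim S (a := c) ⟨hc, hcfd⟩)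
  exact hc_eq ▸ hcU

theorem IsQuasipoint.exists_eq_setOf_mem_of_finiteDimensional {B : Set (ClosedSub H)}
    (hB : IsQuasipoint B) (h : ∃ U ∈ B, FiniteDimensional ℂ U.1) :
    ∃ x₀ : H, x₀ ≠ 0 ∧ B = {U : ClosedSub H | x₀ ∈ U.1} := by
  obtain ⟨V, hV, hV_le⟩ := hB.1.exists_le_of_finiteDimensional h
  have hV_ne : V.1 ≠ ⊥ := fun hV_bot => hB.1.2.1 (val_eq_bot_iff.mp hV_bot ▸ hV)
  obtain ⟨x₀, hx₀V, hx₀⟩ := exists_mem_ne_zero_of_ne_bot hV_ne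
  exact ⟨x₀, hx₀, (hB.2 _ (isFilterBase_setOf_mem hx₀) fun U hU => hV_le U hU hx₀V).symm⟩

theorem IsQuasipoint.mem_of_forall_not_disjoint {B : Set (ClosedSub H)} (hB : IsQuasipoint B)
    {W : ClosedSub H} (hW : ∀ V ∈ B, ¬Disjoint V.1 W.1) : W ∈ B := by
  obtain ⟨⟨V₀, hV₀⟩, -, hB_meet⟩ := hB.1
  let C := {U : ClosedSub H | ∃ V ∈ B, V.inf W ≤ U}
  have hC : IsFilterBase C := by
    refine ⟨⟨W, V₀, hV₀, V₀.inf_le_right W⟩, fun ⟨V, hV, hle⟩ => hW V hV ?_, ?_⟩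
    · exact disjoint_iff.mpr (le_bot_iff.mp hle)
    · rintro a ⟨V₁, hV₁, h₁⟩ b ⟨V₂, hV₂, h₂⟩
      obtain ⟨V₃, hV₃, h₃₁, h₃₂⟩ := hB_meet V₁ hV₁ V₂ hV₂
      exact ⟨V₃.inf W, ⟨V₃, hV₃, le_rfl⟩, (inf_le_inf_right W.1 h₃₁).trans h₁,
        (inf_le_inf_right W.1 h₃₂).trans h₂⟩
  exact hB.2 C hC (fun U hU => ⟨U, hU, U.inf_le_left W⟩) ▸ ⟨V₀, hV₀, V₀.inf_le_right W⟩

theorem quasipoint_quantum_lattice_atomic_or_continuous_general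
    {H : Type*} [NormedAddCommGroup H] [InnerProductSpace ℂ H]
    {𝔅 : Set (ClosedSub H)} (h𝔅 : IsQuasipoint 𝔅) :
    ((∃ U ∈ 𝔅, FiniteDimensional ℂ U.1) ↔
        ∃ x₀ : H, x₀ ≠ 0 ∧ 𝔅 = {U : ClosedSub H | x₀ ∈ U.1}) ∧
      (∀ x y : H, x ≠ 0 → y ≠ 0 →
        𝔅 = {U : ClosedSub H | x ∈ U.1} → 𝔅 = {U : ClosedSub H | y ∈ U.1} →
        Submodule.span ℂ {x} = Submodule.span ℂ {y}) ∧
      ((¬ ∃ U ∈ 𝔅, FiniteDimensional ℂ U.1) ↔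
        ∀ W : ClosedSub H, FiniteDimensional ℂ (H ⧸ W.1) → W ∈ 𝔅) := by
  refine ⟨⟨h𝔅.exists_eq_setOf_mem_of_finiteDimensional, ?_⟩, ?_, ?_, ?_⟩
  · rintro ⟨x₀, -, rfl⟩
    exact ⟨line x₀, mem_span_singleton_self x₀, inferInstanceAs (FiniteDimensional ℂ (ℂ ∙ x₀))⟩
  · rintro x y - - rfl hxy
    exact le_antisymm (span_singleton_le_of_setOf_mem_subset hxy.ge)
      (span_singleton_le_of_setOf_mem_subset hxy.le)
  · intro h_infinite W _
    exact h𝔅.mem_of_forall_not_disjoint fun V hV hVW =>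
      h_infinite ⟨V, hV, finiteDimensional_of_disjoint_of_finiteDimensional_quotient hVW⟩
  · rintro h_codim ⟨U, hU, _⟩
    exact h𝔅.1.not_orthogonal_mem hU <|
      h_codim U.orthogonal (finiteDimensional_quotient_orthogonal U.1)

/-- A quasipoint of `L(H)` is atomic (contains a finite-dimensional subspace) iff it
consists of all closed subspaces containing some fixed line `ℂx₀`, the line being
uniquely determined; and it contains no finite-dimensional subspace iff it contains
every closed subspace of finite codimension. -/
theorem quasipoint_quantum_lattice_atomic_or_continuous
    {H : Type*} [NormedAddCommGroup H] [InnerProductSpace ℂ H] [CompleteSpace H]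
    {𝔅 : Set (ClosedSub H)} (h𝔅 : IsQuasipoint 𝔅) :
    ((∃ U ∈ 𝔅, FiniteDimensional ℂ U.1) ↔
        ∃ x₀ : H, x₀ ≠ 0 ∧ 𝔅 = {U : ClosedSub H | x₀ ∈ U.1}) ∧
      (∀ x y : H, x ≠ 0 → y ≠ 0 →
        𝔅 = {U : ClosedSub H | x ∈ U.1} → 𝔅 = {U : ClosedSub H | y ∈ U.1} →
        Submodule.span ℂ {x} = Submodule.span ℂ {y}) ∧
      ((¬ ∃ U ∈ 𝔅, FiniteDimensional ℂ U.1) ↔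
        ∀ W : ClosedSub H, FiniteDimensional ℂ (H ⧸ W.1) → W ∈ 𝔅) :=
  quasipoint_quantum_lattice_atomic_or_continuous_general h𝔅
end

section
/- Let H be a complex Hilbert space and let σ be a bounded spectral family in L(H), i.e., a spectral family for which there exist λ₀, λ₁ ∈ ℝ with σ(λ₀) = {0} and σ(λ₁) = H. Define f̂ : Q(L(H)) → ℝ by f̂(𝔅) := inf{λ ∈ ℝ : σ(λ) ∈ 𝔅}. Then f̂ is well defined (for every quasipoint 𝔅 the set {λ ∈ ℝ : σ(λ) ∈ 𝔅} is nonempty and bounded below), f̂ takes values in [λ₀, λ₁], and f̂ is upper semicontinuous with respect to the Stone topology on Q(L(H)). -/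
variable {H : Type*} [NormedAddCommGroup H] [InnerProductSpace ℂ H]

instance : Top (ClosedSub H) := ⟨⟨⊤, by rw [Submodule.top_coe]; exact isClosed_univ⟩⟩

/-- A spectral family in `L(H)`. -/
def IsSpectralFamily (σ : ℝ → ClosedSub H) : Prop :=
  (∀ l m : ℝ, l ≤ m → σ l ≤ σ m) ∧
  (∀ l : ℝ, ((σ l).1 : Set H) = ⋂ m ∈ Set.Ioi l, ((σ m).1 : Set H)) ∧
  (⋂ l : ℝ, ((σ l).1 : Set H)) = {0} ∧
  (⨆ l : ℝ, (σ l).1).topologicalClosure = ⊤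

/-- The Stonean space of a lattice: the set of its quasipoints. -/
def Quasipoints (L : Type*) [PartialOrder L] [OrderBot L] : Type _ :=
  {B : Set L // IsQuasipoint B}

/-- The Stone topology, generated by the basic sets `Q_a = {𝔅 : a ∈ 𝔅}`. -/
instance {L : Type*} [PartialOrder L] [OrderBot L] : TopologicalSpace (Quasipoints L) :=
  TopologicalSpace.generateFrom {S | ∃ a : L, S = {B : Quasipoints L | a ∈ B.1}}

/-- The induced function `f̂(𝔅) = inf {λ : σ(λ) ∈ 𝔅}` on the Stonean space. -/
noncomputable def specFunQP (σ : ℝ → ClosedSub H) (𝔅 : Quasipoints (ClosedSub H)) : ℝ :=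
  sInf {l : ℝ | σ l ∈ 𝔅.1}

/-- For a bounded spectral family `σ` in `L(H)` (with `σ(λ₀) = 0` and `σ(λ₁) = H`),
the induced function `f̂(𝔅) = inf {λ : σ(λ) ∈ 𝔅}` on the Stonean space `Q(L(H))` is
well defined, takes values in `[λ₀, λ₁]`, and is upper semicontinuous. -/
theorem specFunQP_welldefined_and_upperSemicontinuous
    {H : Type*} [NormedAddCommGroup H] [InnerProductSpace ℂ H] [CompleteSpace H]
    {σ : ℝ → ClosedSub H} (hσ : IsSpectralFamily σ)
    {l₀ l₁ : ℝ} (h₀ : σ l₀ = ⊥) (h₁ : σ l₁ = ⊤) :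
    (∀ 𝔅 : Quasipoints (ClosedSub H),
      {l : ℝ | σ l ∈ 𝔅.1}.Nonempty ∧ BddBelow {l : ℝ | σ l ∈ 𝔅.1} ∧
        specFunQP σ 𝔅 ∈ Set.Icc l₀ l₁) ∧
    UpperSemicontinuous (specFunQP σ) := by
  obtain ⟨hmono, -, -, -⟩ := hσ
  -- quasipoints are upward closed
  have hup : ∀ (B : Quasipoints (ClosedSub H)) (a b : ClosedSub H),
      a ∈ B.1 → a ≤ b → b ∈ B.1 := by
    rintro ⟨B, ⟨⟨hne, hbot, hfil⟩, hmax⟩⟩ a b ha hab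
    have hbne : b ≠ ⊥ := by
      rintro rfl
      have : a = ⊥ := le_bot_iff.mp hab
      rw [this] at ha
      exact hbot ha
    have hfb : IsFilterBase (insert b B) := by
      refine ⟨⟨b, Set.mem_insert _ _⟩, ?_, ?_⟩
      · rintro (h | h)
        · exact hbne h.symm
        · exact hbot h
      · rintro x (rfl | hx) y (rfl | hy)
        · exact ⟨a, Set.mem_insert_of_mem _ ha, hab, hab⟩
        · obtain ⟨c, hc, hca, hcy⟩ := hfil a ha y hy
          exact ⟨c, Set.mem_insert_of_mem _ hc, hca.trans hab, hcy⟩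
        · obtain ⟨c, hc, hcx, hca⟩ := hfil x hx a ha
          exact ⟨c, Set.mem_insert_of_mem _ hc, hcx, hca.trans hab⟩
        · obtain ⟨c, hc, hcx, hcy⟩ := hfil x hx y hy
          exact ⟨c, Set.mem_insert_of_mem _ hc, hcx, hcy⟩
    have h' := hmax (insert b B) hfb (Set.subset_insert _ _)
    show b ∈ B
    rw [← h']
    exact Set.mem_insert _ _
  -- σ l₁ = ⊤ is in every quasipoint
  have hT : ∀ B : Quasipoints (ClosedSub H), σ l₁ ∈ B.1 := by
    intro B
    obtain ⟨a, ha⟩ := B.2.1.1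
    refine hup B a (σ l₁) ha ?_
    rw [h₁]
    show a.1 ≤ (⊤ : Submodule ℂ H)
    exact le_top
  have hNe : ∀ B : Quasipoints (ClosedSub H), {l : ℝ | σ l ∈ B.1}.Nonempty :=
    fun B => ⟨l₁, hT B⟩
  have hLB : ∀ B : Quasipoints (ClosedSub H), l₀ ∈ lowerBounds {l : ℝ | σ l ∈ B.1} := by
    intro B l hl
    by_contra h
    push_neg at h
    have : σ l ≤ σ l₀ := hmono l l₀ h.le
    rw [h₀, le_bot_iff] at this
    exact B.2.1.2.1 (by rwa [Set.mem_setOf_eq, this] at hl)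
  have hBdd : ∀ B : Quasipoints (ClosedSub H), BddBelow {l : ℝ | σ l ∈ B.1} :=
    fun B => ⟨l₀, hLB B⟩
  constructor
  · intro B
    refine ⟨hNe B, hBdd B, le_csInf (hNe B) (hLB B), csInf_le (hBdd B) (hT B)⟩
  · intro B y hy
    obtain ⟨l, hl, hly⟩ := exists_lt_of_csInf_lt (hNe B) hy
    have hopen : IsOpen {C : Quasipoints (ClosedSub H) | σ l ∈ C.1} :=
      TopologicalSpace.isOpen_generateFrom_of_mem ⟨σ l, rfl⟩
    refine Filter.eventually_of_mem (hopen.mem_nhds hl) (fun C hC => ?_)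
    exact lt_of_le_of_lt (csInf_le (hBdd C) hC) hly
end
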